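/- Let (A; {E_i}; A*; {E*_i}) be a Leonard system on V. For each 0 ≤ i ≤ d there exists a unique monic polynomial p_i of degree i over K such that p_i(A) E*_0 V = E*_i V. -/
import Mathlib


open Polynomial

/-- The primitive idempotent `E_i = ∏_{j ≠ i} (A - θ_j I)/(θ_i - θ_j)` of a
multiplicity-free operator `A` with eigenvalues `θ_0, …, θ_d`. -/
noncomputable def primIdem {K : Type} [Field K] {V : Type} [AddCommGroup V] [Module K V]
    {d : ℕ} (A : Module.End K V) (θ : Fin (d+1) → K) (i : Fin (d+1)) : Module.End K V :=
  Polynomial.aeval A (∏ j ∈ Finset.univ.erase i, ((θ i - θ j)⁻¹ • (X - C (θ j))))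

/-- The polynomial `τ_i(λ) = (λ-θ_0)(λ-θ_1)⋯(λ-θ_{i-1})`. -/
noncomputable def tauP {K : Type} [Field K] (d : ℕ) (θ : Fin (d+1) → K) (i : ℕ) :
    Polynomial K :=
  ∏ k ∈ Finset.univ.filter (fun k : Fin (d+1) => (k : ℕ) < i), (X - C (θ k))

/-- The polynomial `η_i(λ) = (λ-θ_d)(λ-θ_{d-1})⋯(λ-θ_{d-i+1})`. -/
noncomputable def etaP {K : Type} [Field K] (d : ℕ) (θ : Fin (d+1) → K) (i : ℕ) :
    Polynomial K :=
  ∏ k ∈ Finset.univ.filter (fun k : Fin (d+1) => d - i < (k : ℕ)), (X - C (θ k))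

/-- A Leonard system on a `(d+1)`-dimensional vector space `V` over a field `K`. -/
structure LeonardSystem (K V : Type) [Field K] [AddCommGroup V] [Module K V] (d : ℕ) where
  A : Module.End K V
  As : Module.End K V
  θ : Fin (d+1) → K
  θs : Fin (d+1) → K
  hfin : FiniteDimensional K V
  hdim : Module.finrank K V = d + 1
  θ_inj : Function.Injective θ
  θs_inj : Function.Injective θs
  hEig : ∀ i, Module.End.HasEigenvalue A (θ i)
  hEigs : ∀ i, Module.End.HasEigenvalue As (θs i)
  hFar : ∀ i j : Fin (d+1), ((i:ℕ) + 1 < j ∨ (j:ℕ) + 1 < i) →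
    primIdem A θ i * As * primIdem A θ j = 0
  hNear : ∀ i j : Fin (d+1), ((i:ℕ) + 1 = j ∨ (j:ℕ) + 1 = i) →
    primIdem A θ i * As * primIdem A θ j ≠ 0
  hFars : ∀ i j : Fin (d+1), ((i:ℕ) + 1 < j ∨ (j:ℕ) + 1 < i) →
    primIdem As θs i * A * primIdem As θs j = 0
  hNears : ∀ i j : Fin (d+1), ((i:ℕ) + 1 = j ∨ (j:ℕ) + 1 = i) →
    primIdem As θs i * A * primIdem As θs j ≠ 0

namespace LeonardSystem

variable {K : Type} [Field K] {V : Type} [AddCommGroup V] [Module K V] {d : ℕ}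
  (L : LeonardSystem K V d)

/-- `E_i`, the `i`-th primitive idempotent of `A`. -/
noncomputable def E (i : Fin (d+1)) : Module.End K V := primIdem L.A L.θ i

/-- `E*_i`, the `i`-th primitive idempotent of `A*`. -/
noncomputable def Es (i : Fin (d+1)) : Module.End K V := primIdem L.As L.θs i

/-- `τ_i(A)`. -/
noncomputable def tau (i : ℕ) : Module.End K V := Polynomial.aeval L.A (tauP d L.θ i)

/-- `η_i(A)`. -/
noncomputable def eta (i : ℕ) : Module.End K V := Polynomial.aeval L.A (etaP d L.θ i)

/-- The first split sequence `φ_i = (θ*_0-θ*_i) tr(τ_i(A)E*_0)/tr(τ_{i-1}(A)E*_0)`,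
meaningful for `1 ≤ i ≤ d`. -/
noncomputable def φ (i : ℕ) : K :=
  if h : i < d + 1 then
    (L.θs 0 - L.θs ⟨i, h⟩) * (LinearMap.trace K V (L.tau i * L.Es 0))
      / (LinearMap.trace K V (L.tau (i-1) * L.Es 0))
  else 0

/-- The second split sequence `ϕ_i = (θ*_0-θ*_i) tr(η_i(A)E*_0)/tr(η_{i-1}(A)E*_0)`,
meaningful for `1 ≤ i ≤ d`. -/
noncomputable def ϕ (i : ℕ) : K :=
  if h : i < d + 1 then
    (L.θs 0 - L.θs ⟨i, h⟩) * (LinearMap.trace K V (L.eta i * L.Es 0))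
      / (LinearMap.trace K V (L.eta (i-1) * L.Es 0))
  else 0

/-- The switching element `S = ∑_r (ϕ_d⋯ϕ_{d-r+1})/(φ_1⋯φ_r) E_r`. -/
noncomputable def S : Module.End K V :=
  ∑ r : Fin (d+1),
    ((∏ k ∈ Finset.Icc (d - (r:ℕ) + 1) d, L.ϕ k) / (∏ k ∈ Finset.Icc 1 (r:ℕ), L.φ k)) • L.E r

/-- The dual switching element `S* = ∑_r (ϕ_1⋯ϕ_r)/(φ_1⋯φ_r) E*_r`. -/
noncomputable def Ss : Module.End K V :=
  ∑ r : Fin (d+1),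
    ((∏ k ∈ Finset.Icc 1 (r:ℕ), L.ϕ k) / (∏ k ∈ Finset.Icc 1 (r:ℕ), L.φ k)) • L.Es r

end LeonardSystem

section Lagrange
variable {K : Type} [Field K] {V : Type} [AddCommGroup V] [Module K V] {d : ℕ}
  {B : Module.End K V} {θ : Fin (d+1) → K}

lemma lagrange_eval (hθ : Function.Injective θ) (i k : Fin (d+1)) :
    (∏ j ∈ Finset.univ.erase i, ((θ i - θ j)⁻¹ • (X - C (θ j)))).eval (θ k)
      = if k = i then 1 else 0 := by
  rw [eval_prod]
  split_ifs with h
  · subst h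
    apply Finset.prod_eq_one
    intro j hj
    have hne : θ k ≠ θ j := fun he => (Finset.mem_erase.mp hj).1 (hθ he).symm
    simp [sub_ne_zero.mpr hne, inv_mul_cancel₀]
  · apply Finset.prod_eq_zero (Finset.mem_erase.mpr ⟨h, Finset.mem_univ k⟩)
    simp

lemma primIdem_apply_eigenvector (hθ : Function.Injective θ) (i k : Fin (d+1)) {v : V}
    (hv : B.HasEigenvector (θ k) v) :
    primIdem B θ i v = (if k = i then (1:K) else 0) • v := by
  rw [primIdem, Module.End.aeval_apply_of_hasEigenvector hv, lagrange_eval hθ]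
end Lagrange

section Proj
variable {K : Type} [Field K] {V : Type} [AddCommGroup V] [Module K V] {d : ℕ}
  {B : Module.End K V} {θ : Fin (d+1) → K} {u : Fin (d+1) → V}

variable (hθ : Function.Injective θ) (hu : ∀ k, B.HasEigenvector (θ k) (u k))
  (hspan : Submodule.span K (Set.range u) = ⊤)

include hθ hu hspan

omit hθ hu in
lemma pi_ext {f g : Module.End K V} (h : ∀ k, f (u k) = g (u k)) : f = g := by
  apply LinearMap.ext_on hspan
  rintro x ⟨k, rfl⟩
  exact h k

lemma primIdem_mul_primIdem (i j : Fin (d+1)) :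
    primIdem B θ i * primIdem B θ j = if i = j then primIdem B θ i else 0 := by
  apply pi_ext hspan
  intro k
  rw [Module.End.mul_apply, primIdem_apply_eigenvector hθ j k (hu k), map_smul,
    primIdem_apply_eigenvector hθ i k (hu k), smul_smul]
  rcases eq_or_ne i j with rfl | hij
  · rw [if_pos rfl, primIdem_apply_eigenvector hθ i k (hu k)]
    split_ifs <;> simp
  · rw [if_neg hij, LinearMap.zero_apply]
    rcases eq_or_ne k j with rfl | hkj
    · rw [if_neg (fun h : k = i => hij h.symm)]; simp
    · rw [if_neg hkj]; simp

lemma sum_primIdem : ∑ i : Fin (d+1), primIdem B θ i = 1 := by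
  apply pi_ext hspan
  intro k
  simp only [LinearMap.sum_apply, Module.End.one_apply]
  rw [Finset.sum_congr rfl (fun i _ => primIdem_apply_eigenvector hθ i k (hu k))]
  simp

lemma range_primIdem (i : Fin (d+1)) :
    LinearMap.range (primIdem B θ i) = Submodule.span K {u i} := by
  apply le_antisymm
  · rintro _ ⟨x, rfl⟩
    have hx : x ∈ Submodule.span K (Set.range u) := by rw [hspan]; trivial
    obtain ⟨c, rfl⟩ := (Submodule.mem_span_range_iff_exists_fun K).mp hx
    rw [map_sum]
    apply Submodule.sum_mem
    intro k _
    rw [map_smul, primIdem_apply_eigenvector hθ i k (hu k)]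
    rcases eq_or_ne k i with rfl | hk
    · simp [Submodule.smul_mem, Submodule.mem_span_singleton_self]
    · simp [hk]
  · rw [Submodule.span_le, Set.singleton_subset_iff]
    refine ⟨u i, ?_⟩
    rw [primIdem_apply_eigenvector hθ i i (hu i)]
    simp
end Proj

namespace LeonardSystem
variable {K : Type} [Field K] {V : Type} [AddCommGroup V] [Module K V] {d : ℕ}
  (L : LeonardSystem K V d)

/-- chosen eigenvectors of `As` -/
noncomputable def us (k : Fin (d+1)) : V :=
  ((L.hEigs k).exists_hasEigenvector).choose

lemma hus (k : Fin (d+1)) : L.As.HasEigenvector (L.θs k) (L.us k) :=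
  ((L.hEigs k).exists_hasEigenvector).choose_spec

lemma us_span : Submodule.span K (Set.range L.us) = ⊤ := by
  haveI := L.hfin
  have hli : LinearIndependent K L.us :=
    L.As.eigenvectors_linearIndependent' L.θs L.θs_inj L.us L.hus
  exact hli.span_eq_top_of_card_eq_finrank (by simp [L.hdim])

lemma Es_mul_Es (i j : Fin (d+1)) :
    L.Es i * L.Es j = if i = j then L.Es i else 0 :=
  primIdem_mul_primIdem L.θs_inj L.hus L.us_span i j

lemma sum_Es : ∑ i : Fin (d+1), L.Es i = 1 :=
  sum_primIdem L.θs_inj L.hus L.us_span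

lemma range_Es (i : Fin (d+1)) :
    LinearMap.range (L.Es i) = Submodule.span K {L.us i} :=
  range_primIdem L.θs_inj L.hus L.us_span i

lemma Es_apply_of_mem_range {i : Fin (d+1)} {w : V} (hw : w ∈ LinearMap.range (L.Es i)) :
    L.Es i w = w := by
  obtain ⟨x, rfl⟩ := hw
  rw [← Module.End.mul_apply, L.Es_mul_Es i i, if_pos rfl]

lemma Es_apply_of_mem_range_ne {i j : Fin (d+1)} (hij : i ≠ j) {w : V}
    (hw : w ∈ LinearMap.range (L.Es j)) : L.Es i w = 0 := by
  obtain ⟨x, rfl⟩ := hw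
  rw [← Module.End.mul_apply, L.Es_mul_Es i j, if_neg hij, LinearMap.zero_apply]

lemma range_Es_eq_span {i : Fin (d+1)} {w : V} (hw : w ∈ LinearMap.range (L.Es i))
    (hw0 : w ≠ 0) : LinearMap.range (L.Es i) = Submodule.span K {w} := by
  rw [L.range_Es i] at hw ⊢
  obtain ⟨c, rfl⟩ := Submodule.mem_span_singleton.mp hw
  have hc : c ≠ 0 := fun h => hw0 (by simp [h])
  exact (Submodule.span_singleton_smul_eq (IsUnit.mk0 c hc) _).symm

end LeonardSystem

namespace LeonardSystem
variable {K : Type} [Field K] {V : Type} [AddCommGroup V] [Module K V] {d : ℕ}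
  (L : LeonardSystem K V d)

lemma Es_A_far {j k : Fin (d+1)} (h : (k:ℕ)+1 < j ∨ (j:ℕ)+1 < k) {w : V}
    (hw : w ∈ LinearMap.range (L.Es j)) : L.Es k (L.A w) = 0 := by
  have h1 : L.Es k (L.A w) = (L.Es k * L.A * L.Es j) w := by
    rw [Module.End.mul_apply, Module.End.mul_apply, L.Es_apply_of_mem_range hw]
  rw [h1]
  show (primIdem L.As L.θs k * L.A * primIdem L.As L.θs j) w = 0
  rw [L.hFars k j h, LinearMap.zero_apply]

lemma sum_Es_apply (v : V) : ∑ k, L.Es k v = v := by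
  rw [← LinearMap.sum_apply, L.sum_Es, Module.End.one_apply]

lemma exQ : ∀ n : ℕ, ∀ hn : n < d + 1, ∃ p : Polynomial K, p.Monic ∧ p.natDegree = n ∧
    (Polynomial.aeval L.A p) (L.us 0) ∈ LinearMap.range (L.Es ⟨n, hn⟩) ∧
    (Polynomial.aeval L.A p) (L.us 0) ≠ 0 := by
  intro n
  induction n using Nat.strong_induction_on with
  | _ n ih =>
  intro hn
  match n, hn with
  | 0, hn =>
      refine ⟨1, monic_one, natDegree_one, ?_, ?_⟩
      · rw [map_one, Module.End.one_apply, L.range_Es, Fin.mk_zero]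
        exact Submodule.mem_span_singleton_self _
      · rw [map_one, Module.End.one_apply]
        exact (L.hus 0).2
  | (m+1), hn =>
      have hm : m < d + 1 := by omega
      obtain ⟨pm, hpmM, hpmD, hpmR, hpm0⟩ := ih m (by omega) hm
      set w := (Polynomial.aeval L.A pm) (L.us 0) with hwdef
      set i : Fin (d+1) := ⟨m, hm⟩ with hidef
      set i' : Fin (d+1) := ⟨m+1, hn⟩ with hi'def
      have hspanw : LinearMap.range (L.Es i) = Submodule.span K {w} :=
        L.range_Es_eq_span hpmR hpm0
      have hne : L.Es i' (L.A w) ≠ 0 := by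
        intro h0
        apply L.hNears i' i (Or.inr rfl)
        refine LinearMap.ext fun x => ?_
        show L.Es i' (L.A (L.Es i x)) = (0 : Module.End K V) x
        rw [LinearMap.zero_apply]
        have hx : L.Es i x ∈ Submodule.span K {w} := by rw [← hspanw]; exact ⟨x, rfl⟩
        obtain ⟨c, hc⟩ := Submodule.mem_span_singleton.mp hx
        simp only [Module.End.mul_apply, LinearMap.zero_apply, ← hc, map_smul, h0, smul_zero]
      have hEiAw : L.Es i (L.A w) ∈ Submodule.span K {w} := by
        rw [← hspanw]; exact ⟨_, rfl⟩
      obtain ⟨a, ha⟩ := Submodule.mem_span_singleton.mp hEiAw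
      have hsum : L.A w = ∑ k, L.Es k (L.A w) := (L.sum_Es_apply _).symm
      rcases m with _ | m''
      · -- m = 0
        have hii' : i ≠ i' := by simp [hidef, hi'def, Fin.ext_iff]
        have hzero : ∀ k ∈ Finset.univ, k ∉ ({i, i'} : Finset (Fin (d+1))) →
            L.Es k (L.A w) = 0 := by
          intro k _ hk
          simp only [Finset.mem_insert, Finset.mem_singleton, not_or] at hk
          have h1 : (k : ℕ) ≠ 0 := fun h => hk.1 (Fin.ext h)
          have h2 : (k : ℕ) ≠ 1 := fun h => hk.2 (Fin.ext h)
          exact L.Es_A_far (show (k:ℕ)+1 < 0 ∨ 0+1 < (k:ℕ) from by omega) hpmR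
        have hsum2 : L.A w = L.Es i (L.A w) + L.Es i' (L.A w) := by
          conv_lhs => rw [hsum]
          rw [← Finset.sum_subset (Finset.subset_univ {i, i'}) hzero,
            Finset.sum_pair hii']
        refine ⟨(X - C a) * pm, (monic_X_sub_C a).mul hpmM, ?_, ?_, ?_⟩
        · rw [(monic_X_sub_C a).natDegree_mul hpmM, hpmD, natDegree_X_sub_C]
        · have hval : (Polynomial.aeval L.A) ((X - C a) * pm) (L.us 0)
              = L.Es i' (L.A w) := by
            rw [map_mul, Module.End.mul_apply, ← hwdef]
            simp only [map_sub, aeval_X, aeval_C, LinearMap.sub_apply,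
              Module.algebraMap_end_apply]
            conv_lhs => rw [hsum2]
            rw [← ha]
            abel
          rw [hval]
          exact ⟨_, rfl⟩
        · have hval : (Polynomial.aeval L.A) ((X - C a) * pm) (L.us 0)
              = L.Es i' (L.A w) := by
            rw [map_mul, Module.End.mul_apply, ← hwdef]
            simp only [map_sub, aeval_X, aeval_C, LinearMap.sub_apply,
              Module.algebraMap_end_apply]
            conv_lhs => rw [hsum2]
            rw [← ha]
            abel
          rw [hval]
          exact hne
      · -- m = m'' + 1
        have hm'' : m'' < d + 1 := by omega
        obtain ⟨pq, hpqM, hpqD, hpqR, hpq0⟩ := ih m'' (by omega) hm''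
        set w' := (Polynomial.aeval L.A pq) (L.us 0) with hw'def
        set im : Fin (d+1) := ⟨m'', hm''⟩ with him
        have hspanw' : LinearMap.range (L.Es im) = Submodule.span K {w'} :=
          L.range_Es_eq_span hpqR hpq0
        have hEimAw : L.Es im (L.A w) ∈ Submodule.span K {w'} := by
          rw [← hspanw']; exact ⟨_, rfl⟩
        obtain ⟨c, hc⟩ := Submodule.mem_span_singleton.mp hEimAw
        have hii' : i ≠ i' := by simp [hidef, hi'def, Fin.ext_iff]
        have himi : im ∉ ({i, i'} : Finset (Fin (d+1))) := by
          simp only [Finset.mem_insert, Finset.mem_singleton, him, hidef, hi'def,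
            Fin.mk.injEq, not_or]
          omega
        have hzero : ∀ k ∈ Finset.univ, k ∉ ({im, i, i'} : Finset (Fin (d+1))) →
            L.Es k (L.A w) = 0 := by
          intro k _ hk
          simp only [Finset.mem_insert, Finset.mem_singleton, not_or] at hk
          have h1 : (k : ℕ) ≠ m'' := fun h => hk.1 (Fin.ext h)
          have h2 : (k : ℕ) ≠ m'' + 1 := fun h => hk.2.1 (Fin.ext h)
          have h3 : (k : ℕ) ≠ m'' + 2 := fun h => hk.2.2 (Fin.ext h)
          exact L.Es_A_far
            (show (k:ℕ)+1 < m''+1 ∨ (m''+1)+1 < (k:ℕ) from by omega) hpmR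
        have hsum2 : L.A w = L.Es im (L.A w) + L.Es i (L.A w) + L.Es i' (L.A w) := by
          conv_lhs => rw [hsum]
          rw [← Finset.sum_subset (Finset.subset_univ {im, i, i'}) hzero,
            Finset.sum_insert himi, Finset.sum_pair hii', add_assoc]
        have hdeglt : ((C c * pq).degree) < ((X - C a) * pm).degree := by
          have hq : (C c * pq).degree ≤ (m'' : WithBot ℕ) := by
            rcases eq_or_ne c 0 with rfl | hc0
            · simp
            · rw [degree_C_mul hc0, degree_eq_natDegree hpqM.ne_zero, hpqD]
          apply lt_of_le_of_lt hq
          rw [degree_eq_natDegree ((monic_X_sub_C a).mul hpmM).ne_zero,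
            (monic_X_sub_C a).natDegree_mul hpmM, hpmD, natDegree_X_sub_C]
          exact_mod_cast (by omega : m'' < 1 + (m''+1))
        have hM : ((X - C a) * pm - C c * pq).Monic :=
          ((monic_X_sub_C a).mul hpmM).sub_of_left hdeglt
        have hD : ((X - C a) * pm - C c * pq).natDegree = m'' + 1 + 1 := by
          have h1 : ((X - C a) * pm).natDegree = m'' + 1 + 1 := by
            rw [(monic_X_sub_C a).natDegree_mul hpmM, hpmD, natDegree_X_sub_C]
            omega
          exact (natDegree_eq_of_degree_eq (degree_sub_eq_left_of_degree_lt hdeglt)).trans h1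
        have hval : (Polynomial.aeval L.A) ((X - C a) * pm - C c * pq) (L.us 0)
            = L.Es i' (L.A w) := by
          rw [map_sub, map_mul, LinearMap.sub_apply, Module.End.mul_apply, ← hwdef]
          simp only [map_sub, map_mul, aeval_X, aeval_C, LinearMap.sub_apply,
            Module.End.mul_apply, Module.algebraMap_end_apply, ← hw'def]
          conv_lhs => rw [hsum2]
          rw [← ha, ← hc]
          abel
        exact ⟨_, hM, hD, hval ▸ ⟨_, rfl⟩, hval ▸ hne⟩

end LeonardSystem

namespace LeonardSystem
variable {K : Type} [Field K] {V : Type} [AddCommGroup V] [Module K V] {d : ℕ}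
  (L : LeonardSystem K V d)

/-- chosen monic polynomial of degree `i` mapping `E*_0 V` into `E*_i V`. -/
noncomputable def P (i : Fin (d+1)) : Polynomial K := (L.exQ i.1 i.2).choose

/-- `W i = p_i(A) v₀`. -/
noncomputable def W (i : Fin (d+1)) : V := (Polynomial.aeval L.A (L.P i)) (L.us 0)

lemma P_monic (i : Fin (d+1)) : (L.P i).Monic := (L.exQ i.1 i.2).choose_spec.1

lemma P_natDegree (i : Fin (d+1)) : (L.P i).natDegree = (i : ℕ) :=
  (L.exQ i.1 i.2).choose_spec.2.1

lemma W_mem (i : Fin (d+1)) : L.W i ∈ LinearMap.range (L.Es i) := by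
  have := (L.exQ i.1 i.2).choose_spec.2.2.1
  simpa [W, P] using this

lemma W_ne (i : Fin (d+1)) : L.W i ≠ 0 := (L.exQ i.1 i.2).choose_spec.2.2.2

lemma P_zero : L.P 0 = 1 := by
  have := L.P_natDegree 0
  rw [Fin.val_zero] at this
  exact (L.P_monic 0).natDegree_eq_zero.mp this

lemma W_zero : L.W 0 = L.us 0 := by
  rw [W, L.P_zero, map_one, Module.End.one_apply]

/-- span of `W j` for `j ≤ n`. -/
noncomputable def Slow (n : ℕ) : Submodule K V :=
  Submodule.span K (L.W '' {j : Fin (d+1) | (j : ℕ) ≤ n})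

lemma Slow_mono {n n' : ℕ} (h : n ≤ n') : L.Slow n ≤ L.Slow n' :=
  Submodule.span_mono (Set.image_mono fun j hj => le_trans hj h)

lemma aeval_mem_Slow : ∀ n : ℕ, n < d + 1 → ∀ r : Polynomial K, r.natDegree ≤ n →
    (Polynomial.aeval L.A r) (L.us 0) ∈ L.Slow n := by
  intro n
  induction n with
  | zero =>
    intro _ r hr
    rw [Polynomial.eq_C_of_natDegree_le_zero hr, aeval_C, Module.algebraMap_end_apply,
      ← L.W_zero]
    exact Submodule.smul_mem _ _ (Submodule.subset_span ⟨0, by simp, rfl⟩)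
  | succ n ihn =>
    intro hn r hr
    set c := r.coeff (n+1) with hcdef
    set g := r - C c * L.P ⟨n+1, hn⟩ with hgdef
    have hPd : (L.P ⟨n+1, hn⟩).natDegree = n+1 := L.P_natDegree _
    have hgd : g.natDegree ≤ n := by
      apply natDegree_le_iff_coeff_eq_zero.mpr
      intro m hm
      rw [hgdef, coeff_sub, coeff_C_mul]
      rcases eq_or_lt_of_le (show n + 1 ≤ m by omega) with h | h
      · have h1 : (L.P ⟨n+1, hn⟩).coeff (n+1) = 1 := by
          have h2 := (L.P_monic ⟨n+1, hn⟩).coeff_natDegree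
          rwa [hPd] at h2
        rw [← h, h1, mul_one, ← hcdef, sub_self]
      · rw [coeff_eq_zero_of_natDegree_lt (lt_of_le_of_lt hr h),
          coeff_eq_zero_of_natDegree_lt (by omega : (L.P ⟨n+1, hn⟩).natDegree < m),
          mul_zero, sub_zero]
    have hsplit : r = C c * L.P ⟨n+1, hn⟩ + g := by rw [hgdef]; ring
    rw [hsplit, map_add, map_mul, aeval_C, LinearMap.add_apply, Module.End.mul_apply,
      Module.algebraMap_end_apply]
    apply Submodule.add_mem
    · exact Submodule.smul_mem _ _ (Submodule.subset_span ⟨⟨n+1, hn⟩, by simp, rfl⟩)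
    · exact L.Slow_mono (Nat.le_succ n) (ihn (by omega) g hgd)

lemma Es_Slow {i : Fin (d+1)} {n : ℕ} (hn : n < (i : ℕ)) {v : V} (hv : v ∈ L.Slow n) :
    L.Es i v = 0 := by
  have hle : L.Slow n ≤ LinearMap.ker (L.Es i) := by
    rw [Slow, Submodule.span_le]
    rintro _ ⟨j, hj, rfl⟩
    have hj' : (j : ℕ) ≤ n := hj
    have hji : i ≠ j := by
      intro h; rw [h] at hn; omega
    exact LinearMap.mem_ker.mpr (L.Es_apply_of_mem_range_ne hji (L.W_mem j))
  exact LinearMap.mem_ker.mp (hle hv)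

lemma Es_aeval_key {r : Polynomial K} (hr : r ≠ 0) (h : r.natDegree < d + 1) :
    L.Es ⟨r.natDegree, h⟩ ((Polynomial.aeval L.A r) (L.us 0))
      = r.leadingCoeff • L.W ⟨r.natDegree, h⟩ := by
  set i : Fin (d+1) := ⟨r.natDegree, h⟩ with hidef
  set g := r - C r.leadingCoeff * L.P i with hgdef
  have hPd : (L.P i).natDegree = r.natDegree := L.P_natDegree i
  have hgm : g.coeff r.natDegree = 0 := by
    have h1 : (L.P i).coeff r.natDegree = 1 := by
      have h2 := (L.P_monic i).coeff_natDegree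
      rwa [hPd] at h2
    rw [hgdef, coeff_sub, coeff_C_mul, h1, mul_one, ← leadingCoeff, sub_self]
  have hgd : g.natDegree ≤ r.natDegree := by
    apply natDegree_le_iff_coeff_eq_zero.mpr
    intro k hk
    rw [hgdef, coeff_sub, coeff_C_mul,
      coeff_eq_zero_of_natDegree_lt (by omega : r.natDegree < k),
      coeff_eq_zero_of_natDegree_lt (by omega : (L.P i).natDegree < k), mul_zero,
      zero_sub, neg_zero]
  have hEg : L.Es i ((Polynomial.aeval L.A g) (L.us 0)) = 0 := by
    rcases eq_or_ne g 0 with hg0 | hg0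
    · rw [hg0]; simp
    · have hglt : g.natDegree < r.natDegree := by
        rcases eq_or_lt_of_le hgd with h' | h'
        · exact absurd (by rw [leadingCoeff, h']; exact hgm)
            (leadingCoeff_ne_zero.mpr hg0)
        · exact h'
      exact L.Es_Slow hglt (L.aeval_mem_Slow g.natDegree (by omega) g le_rfl)
  have hsplit : r = C r.leadingCoeff * L.P i + g := by rw [hgdef]; ring
  conv_lhs => rw [hsplit]
  rw [map_add, map_mul, aeval_C, LinearMap.add_apply, Module.End.mul_apply,
    Module.algebraMap_end_apply, map_add, map_smul, hEg, add_zero,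
    show ((Polynomial.aeval L.A (L.P i)) (L.us 0)) = L.W i from rfl,
    L.Es_apply_of_mem_range (L.W_mem i)]

end LeonardSystem

/-- for each `i` there is a unique monic polynomial `p_i` of degree `i`
with `p_i(A) E*_0 V = E*_i V`. -/
theorem LeonardSystem.exists_unique_p {K : Type} [Field K] {V : Type}
    [AddCommGroup V] [Module K V] {d : ℕ} (L : LeonardSystem K V d) (i : Fin (d+1)) :
    ∃! p : Polynomial K, p.Monic ∧ p.natDegree = (i : ℕ) ∧
      Submodule.map (Polynomial.aeval L.A p) (LinearMap.range (L.Es 0)) =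
        LinearMap.range (L.Es i) := by
  refine ⟨L.P i, ⟨L.P_monic i, L.P_natDegree i, ?_⟩, ?_⟩
  · rw [L.range_Es 0, Submodule.map_span, Set.image_singleton]
    exact (L.range_Es_eq_span (L.W_mem i) (L.W_ne i)).symm
  · rintro q ⟨hqM, hqD, hqR⟩
    by_contra hne
    have hr0 : q - L.P i ≠ 0 := sub_ne_zero_of_ne hne
    have hdeg : (q - L.P i).degree < q.degree := by
      refine degree_sub_lt ?_ hqM.ne_zero ?_
      · rw [degree_eq_natDegree hqM.ne_zero, degree_eq_natDegree (L.P_monic i).ne_zero,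
          hqD, L.P_natDegree i]
      · rw [hqM.leadingCoeff, (L.P_monic i).leadingCoeff]
    have hmlt : (q - L.P i).natDegree < (i : ℕ) := by
      have h2 := natDegree_lt_natDegree hr0 hdeg
      rwa [hqD] at h2
    have hmd : (q - L.P i).natDegree < d + 1 := by
      have := i.isLt; omega
    have hmem : (Polynomial.aeval L.A (q - L.P i)) (L.us 0) ∈ LinearMap.range (L.Es i) := by
      rw [map_sub, LinearMap.sub_apply]
      apply Submodule.sub_mem
      · rw [← hqR]
        exact Submodule.mem_map_of_mem
          (by rw [L.range_Es 0]; exact Submodule.mem_span_singleton_self _)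
      · exact L.W_mem i
    have hEs0 : L.Es ⟨(q - L.P i).natDegree, hmd⟩
        ((Polynomial.aeval L.A (q - L.P i)) (L.us 0)) = 0 :=
      L.Es_apply_of_mem_range_ne (Fin.ne_of_val_ne (Nat.ne_of_lt hmlt)) hmem
    rw [L.Es_aeval_key hr0 hmd] at hEs0
    exact smul_ne_zero (leadingCoeff_ne_zero.mpr hr0) (L.W_ne _) hEs0
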